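/- Let ∇ be a torsion-free affine connection on ℝⁿ given by smooth Christoffel symbols Γᵏᵢⱼ, and let g_∇ be its Riemannian extension on ℝ²ⁿ. Fix a point (p,ω) ∈ ℝ²ⁿ and a tangent vector X̃ = (α₁,…,αₙ,α₁',…,αₙ') ∈ ℝ²ⁿ, and let X = (α₁,…,αₙ) ∈ ℝⁿ. Then the characteristic polynomial of the Szabó operator S̃(X̃) of the Levi-Civita connection of g_∇ at (p,ω) equals the square of the characteristic polynomial of the affine Szabó operator S^∇(X) of ∇ at p. -/

import Mathlib

open scoped BigOperators

noncomputable section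

variable {ι : Type} [Fintype ι] [DecidableEq ι]

/-- Partial derivative in the `i`-th coordinate direction. -/
def pd (i : ι) (f : (ι → ℝ) → ℝ) : (ι → ℝ) → ℝ :=
  fun p => fderiv ℝ f p (Pi.single i 1)

/-- Curvature components `R^l_{ijk}` of the torsion-free connection with Christoffel
symbols `Γ k i j = Γᵏᵢⱼ`:
`Rˡᵢⱼₖ = ∂ᵢΓˡⱼₖ − ∂ⱼΓˡᵢₖ + Σₘ (Γˡᵢₘ Γᵐⱼₖ − Γˡⱼₘ Γᵐᵢₖ)`. -/
def curv (Γ : ι → ι → ι → (ι → ℝ) → ℝ) (l i j k : ι) : (ι → ℝ) → ℝ :=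
  fun p => pd i (Γ l j k) p - pd j (Γ l i k) p +
    ∑ m, (Γ l i m p * Γ m j k p - Γ l j m p * Γ m i k p)

/-- Components `(∇ₕR)ˡᵢⱼₖ` of the covariant derivative of the curvature. -/
def covR (Γ : ι → ι → ι → (ι → ℝ) → ℝ) (h l i j k : ι) : (ι → ℝ) → ℝ :=
  fun p => pd h (curv Γ l i j k) p +
    ∑ m, (Γ l h m p * curv Γ m i j k p - Γ m h i p * curv Γ l m j k p
      - Γ m h j p * curv Γ l i m k p - Γ m h k p * curv Γ l i j m p)

/-- The Szabó operator `S(X) : Y ↦ (∇_X R)(Y,X)X` at the point `p`, as a matrix: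
`(S(X)Y)ˡ = Σ_{h,i,j,k} Xʰ Yⁱ Xʲ Xᵏ (∇ₕR)ˡᵢⱼₖ`. -/
def szabo (Γ : ι → ι → ι → (ι → ℝ) → ℝ) (p X : ι → ℝ) : Matrix ι ι ℝ :=
  Matrix.of fun l i => ∑ h, ∑ j, ∑ k, X h * X j * X k * covR Γ h l i j k p

/-- Ricci tensor `Ricⱼₖ = Σᵢ Rⁱᵢⱼₖ`. -/
def ricci (Γ : ι → ι → ι → (ι → ℝ) → ℝ) (j k : ι) : (ι → ℝ) → ℝ :=
  fun p => ∑ i, curv Γ i i j k p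

/-- Covariant derivative of the Ricci tensor,
`(∇ᵢRic)ⱼₖ = ∂ᵢRicⱼₖ − Σₘ (Γᵐᵢⱼ Ricₘₖ + Γᵐᵢₖ Ricⱼₘ)`. -/
def covRic (Γ : ι → ι → ι → (ι → ℝ) → ℝ) (i j k : ι) : (ι → ℝ) → ℝ :=
  fun p => pd i (ricci Γ j k) p -
    ∑ m, (Γ m i j p * ricci Γ m k p + Γ m i k p * ricci Γ j m p)

/-- The Ricci tensor is cyclic parallel at `p`. -/
def CyclicParallelAt (Γ : ι → ι → ι → (ι → ℝ) → ℝ) (p : ι → ℝ) : Prop :=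
  ∀ i j k, covRic Γ i j k p + covRic Γ j k i p + covRic Γ k i j p = 0

/-- Christoffel symbols `Γ̃ᶜₐᵦ = ½ Σ_d g̃ᶜᵈ (∂ₐ g̃ᵦ_d + ∂ᵦ g̃ₐ_d − ∂_d g̃ₐᵦ)` of the
Levi-Civita connection of a pseudo-Riemannian metric `g`. -/
def christoffel (g : (ι → ℝ) → Matrix ι ι ℝ) (c a b : ι) : (ι → ℝ) → ℝ :=
  fun p => (1 / 2) * ∑ d, (g p)⁻¹ c d *
    (pd a (fun q => g q b d) p + pd b (fun q => g q a d) p - pd d (fun q => g q a b) p)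

end

/-- The Riemannian extension `g_∇` on `ℝ²ⁿ = (Fin n ⊕ Fin n) → ℝ` of the torsion-free
connection with Christoffel symbols `Γ`: `g_{ij} = −2 Σₖ u_{k'} Γᵏᵢⱼ`, `g_{ij'} = g_{j'i} = δᵢⱼ`,
`g_{i'j'} = 0`, where the base coordinates are indexed by `Sum.inl` and the fiber
coordinates by `Sum.inr`. -/
def gExt {n : ℕ} (Γ : Fin n → Fin n → Fin n → (Fin n → ℝ) → ℝ) :
    ((Fin n ⊕ Fin n) → ℝ) → Matrix (Fin n ⊕ Fin n) (Fin n ⊕ Fin n) ℝ :=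
  fun u => Matrix.of fun a b =>
    match a, b with
    | Sum.inl i, Sum.inl j => -2 * ∑ k, u (Sum.inr k) * Γ k i j (u ∘ Sum.inl)
    | Sum.inl i, Sum.inr j => if i = j then 1 else 0
    | Sum.inr i, Sum.inl j => if i = j then 1 else 0
    | Sum.inr _, Sum.inr _ => 0

/-!
In the coordinates `(p, ω)` the Levi-Civita connection of `g_∇` has `Γ̃ᵏᵢⱼ = Γᵏᵢⱼ`,
`Γ̃^{k'}_{ij'} = −Γʲᵢₖ`, `Γ̃^{k'}_{i'j} = −Γⁱⱼₖ`, `Γ̃^{k'}_{ij}` linear in `ω`, and all other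
symbols zero. Hence the components of `R̃` and `∇̃R̃` with an upper base index are those of `R`
and `∇R` when every index is a base index and vanish otherwise, while
`(∇̃R̃)^{l'}_{h i' j k} = (∇R)ⁱ_{h l k j}` and the other components with upper index `l'` and
lower index `i'` vanish. So `S̃(X̃)` is block lower triangular with diagonal blocks `S^∇(X)` and
its transpose, and its characteristic polynomial is the square of that of `S^∇(X)`.
-/

open Matrix

section PartialDerivative

variable {ι : Type} [DecidableEq ι] {f g : (ι → ℝ) → ℝ} {p : ι → ℝ} {i : ι}

lemma pd_mul [Fintype ι] (hf : DifferentiableAt ℝ f p) (hg : DifferentiableAt ℝ g p) :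
    pd i (fun x => f x * g x) p = pd i f p * g p + f p * pd i g p := by
  simp [pd, fderiv_fun_mul hf hg]
  ring

lemma pd_const (c : ℝ) : pd i (fun _ => c) p = 0 := by
  simp [pd]

lemma pd_zero : pd i (0 : (ι → ℝ) → ℝ) p = 0 :=
  pd_const 0

lemma pd_neg [Fintype ι] : pd i (fun x => -f x) p = -pd i f p := by
  simp [pd]

lemma pd_const_mul [Fintype ι] (hf : DifferentiableAt ℝ f p) (c : ℝ) :
    pd i (fun x => c * f x) p = c * pd i f p := by
  simp [pd, fderiv_const_mul hf]

lemma pd_sum [Fintype ι] {κ : Type*} (s : Finset κ) {F : κ → (ι → ℝ) → ℝ}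
    (hF : ∀ k ∈ s, DifferentiableAt ℝ (F k) p) :
    pd i (fun x => ∑ k ∈ s, F k x) p = ∑ k ∈ s, pd i (F k) p := by
  simp [pd, fderiv_fun_sum hF]

lemma pd_apply (a b : ι) : pd a (fun u : ι → ℝ => u b) p = if b = a then 1 else 0 := by
  rw [pd, show (fun u : ι → ℝ => u b) = ContinuousLinearMap.proj (R := ℝ) b from rfl,
    ContinuousLinearMap.fderiv]
  simp [Pi.single_apply]

lemma ContDiff.pd [Fintype ι] (hf : ContDiff ℝ (⊤ : ℕ∞) f) (i : ι) :
    ContDiff ℝ (⊤ : ℕ∞) (pd i f) :=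
  (hf.fderiv_right (by exact_mod_cast le_top)).clm_apply contDiff_const

end PartialDerivative

section TotalSpace

variable {n : ℕ} {f : (Fin n → ℝ) → ℝ}

def baseProj (n : ℕ) : ((Fin n ⊕ Fin n) → ℝ) →L[ℝ] (Fin n → ℝ) :=
  ContinuousLinearMap.pi fun i => ContinuousLinearMap.proj (Sum.inl i)

lemma contDiff_comp_inl (hf : ContDiff ℝ (⊤ : ℕ∞) f) :
    ContDiff ℝ (⊤ : ℕ∞) (fun u : (Fin n ⊕ Fin n) → ℝ => f (u ∘ Sum.inl)) :=
  hf.comp (baseProj n).contDiff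

lemma pd_comp_inl (hf : Differentiable ℝ f) (a : Fin n ⊕ Fin n) (u : (Fin n ⊕ Fin n) → ℝ) :
    pd a (fun v => f (v ∘ Sum.inl)) u
      = fderiv ℝ f (u ∘ Sum.inl) (Pi.single a (1 : ℝ) ∘ Sum.inl) := by
  rw [pd, show (fun v : (Fin n ⊕ Fin n) → ℝ => f (v ∘ Sum.inl)) = f ∘ baseProj n from rfl,
    fderiv_comp u (hf _) (baseProj n).differentiableAt, (baseProj n).fderiv]
  rfl

lemma pd_inl_comp_inl (hf : Differentiable ℝ f) (i : Fin n) (u : (Fin n ⊕ Fin n) → ℝ) :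
    pd (Sum.inl i) (fun v => f (v ∘ Sum.inl)) u = pd i f (u ∘ Sum.inl) := by
  rw [pd_comp_inl hf, pd]
  congr 1
  funext j
  simp [Pi.single_apply]

lemma pd_inr_comp_inl (hf : Differentiable ℝ f) (i : Fin n) (u : (Fin n ⊕ Fin n) → ℝ) :
    pd (Sum.inr i) (fun v => f (v ∘ Sum.inl)) u = 0 := by
  rw [pd_comp_inl hf]
  convert (fderiv ℝ f (u ∘ Sum.inl)).map_zero
  funext j
  simp

end TotalSpace

section FiberLinear

variable {n : ℕ} {F : Fin n → (Fin n → ℝ) → ℝ}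

def fiberLinear (F : Fin n → (Fin n → ℝ) → ℝ) (u : (Fin n ⊕ Fin n) → ℝ) : ℝ :=
  ∑ s, u (Sum.inr s) * F s (u ∘ Sum.inl)

lemma contDiff_fiberLinear (hF : ∀ s, ContDiff ℝ (⊤ : ℕ∞) (F s)) :
    ContDiff ℝ (⊤ : ℕ∞) (fiberLinear F) :=
  ContDiff.sum fun s _ => (contDiff_apply ℝ ℝ (Sum.inr s)).mul (contDiff_comp_inl (hF s))

lemma pd_fiberLinear (hF : ∀ s, ContDiff ℝ (⊤ : ℕ∞) (F s)) (a : Fin n ⊕ Fin n)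
    (u : (Fin n ⊕ Fin n) → ℝ) :
    pd a (fiberLinear F) u = ∑ s, ((if Sum.inr s = a then 1 else 0) * F s (u ∘ Sum.inl)
      + u (Sum.inr s) * pd a (fun v => F s (v ∘ Sum.inl)) u) := by
  have hd : ∀ s, DifferentiableAt ℝ (fun v : (Fin n ⊕ Fin n) → ℝ => F s (v ∘ Sum.inl)) u :=
    fun s => (contDiff_comp_inl (hF s)).differentiable (by simp) u
  unfold fiberLinear
  rw [pd_sum _ fun s _ => (differentiableAt_apply (Sum.inr s) u).fun_mul (hd s)]
  simp only [pd_mul (differentiableAt_apply _ u) (hd _), pd_apply]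

lemma pd_inl_fiberLinear (hF : ∀ s, ContDiff ℝ (⊤ : ℕ∞) (F s)) (i : Fin n)
    (u : (Fin n ⊕ Fin n) → ℝ) :
    pd (Sum.inl i) (fiberLinear F) u = fiberLinear (fun s => pd i (F s)) u := by
  simp [pd_fiberLinear hF, pd_inl_comp_inl ((hF _).differentiable (by simp)), fiberLinear]

lemma pd_inr_fiberLinear (hF : ∀ s, ContDiff ℝ (⊤ : ℕ∞) (F s)) (i : Fin n)
    (u : (Fin n ⊕ Fin n) → ℝ) :
    pd (Sum.inr i) (fiberLinear F) u = F i (u ∘ Sum.inl) := by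
  simp [pd_fiberLinear hF, pd_inr_comp_inl ((hF _).differentiable (by simp))]

end FiberLinear

noncomputable section RiemannianExtension

variable {n : ℕ} {Γ : Fin n → Fin n → Fin n → (Fin n → ℝ) → ℝ}

def gExtInv (Γ : Fin n → Fin n → Fin n → (Fin n → ℝ) → ℝ) (u : (Fin n ⊕ Fin n) → ℝ) :
    Matrix (Fin n ⊕ Fin n) (Fin n ⊕ Fin n) ℝ :=
  Matrix.of fun a b =>
    match a, b with
    | Sum.inl _, Sum.inl _ => 0
    | Sum.inl i, Sum.inr j => if i = j then 1 else 0
    | Sum.inr i, Sum.inl j => if i = j then 1 else 0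
    | Sum.inr i, Sum.inr j => 2 * fiberLinear (fun k => Γ k i j) u

lemma gExt_mul_gExtInv (u : (Fin n ⊕ Fin n) → ℝ) : gExt Γ u * gExtInv Γ u = 1 := by
  ext (i | i) (j | j) <;>
    simp [Matrix.mul_apply, Fintype.sum_sum_type, gExt, gExtInv, fiberLinear, Matrix.one_apply,
      mul_comm]

lemma gExt_inv (u : (Fin n ⊕ Fin n) → ℝ) : (gExt Γ u)⁻¹ = gExtInv Γ u :=
  Matrix.inv_eq_right_inv (gExt_mul_gExtInv u)

lemma pd_gExt_inl_inl (hΓ : ∀ k i j, ContDiff ℝ (⊤ : ℕ∞) (Γ k i j)) (i j : Fin n)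
    (a : Fin n ⊕ Fin n) (u : (Fin n ⊕ Fin n) → ℝ) :
    pd a (fun q => gExt Γ q (Sum.inl i) (Sum.inl j)) u
      = -2 * pd a (fiberLinear fun k => Γ k i j) u :=
  pd_const_mul ((contDiff_fiberLinear fun k => hΓ k i j).differentiable (by simp) u) _

lemma pd_gExt_of_isRight {a b : Fin n ⊕ Fin n} (hab : a.isRight ∨ b.isRight)
    (c : Fin n ⊕ Fin n) (u : (Fin n ⊕ Fin n) → ℝ) :
    pd c (fun q => gExt Γ q a b) u = 0 := by
  rcases a with i | i <;> rcases b with j | j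
  · simp at hab
  all_goals exact pd_const _

/-- The coefficient of `ω_s` in `Γ̃^{l'}_{ij}`. -/
def extChristoffelCoeff (Γ : Fin n → Fin n → Fin n → (Fin n → ℝ) → ℝ) (s i j l : Fin n) :
    (Fin n → ℝ) → ℝ :=
  fun p => pd l (Γ s i j) p - pd i (Γ s j l) p - pd j (Γ s i l) p +
    2 * ∑ m, Γ s l m p * Γ m i j p

lemma contDiff_extChristoffelCoeff (hΓ : ∀ k i j, ContDiff ℝ (⊤ : ℕ∞) (Γ k i j))
    (s i j l : Fin n) : ContDiff ℝ (⊤ : ℕ∞) (extChristoffelCoeff Γ s i j l) :=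
  (((hΓ s i j).pd l).sub ((hΓ s j l).pd i) |>.sub ((hΓ s i l).pd j)).add <|
    contDiff_const.mul <| ContDiff.sum fun m _ => (hΓ s l m).mul (hΓ m i j)

def extChristoffel (Γ : Fin n → Fin n → Fin n → (Fin n → ℝ) → ℝ) :
    (Fin n ⊕ Fin n) → (Fin n ⊕ Fin n) → (Fin n ⊕ Fin n) → ((Fin n ⊕ Fin n) → ℝ) → ℝ :=
  fun c a b =>
    match c, a, b with
    | Sum.inl l, Sum.inl i, Sum.inl j => fun u => Γ l i j (u ∘ Sum.inl)
    | Sum.inr l, Sum.inl i, Sum.inl j => fiberLinear fun s => extChristoffelCoeff Γ s i j l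
    | Sum.inr l, Sum.inl i, Sum.inr j => fun u => -Γ j i l (u ∘ Sum.inl)
    | Sum.inr l, Sum.inr i, Sum.inl j => fun u => -Γ i j l (u ∘ Sum.inl)
    | _, _, _ => 0

lemma christoffel_gExt (hΓ : ∀ k i j, ContDiff ℝ (⊤ : ℕ∞) (Γ k i j)) :
    christoffel (gExt Γ) = extChristoffel Γ := by
  funext c a b u
  rw [christoffel, gExt_inv, Fintype.sum_sum_type]
  rcases c with l | l <;> rcases a with i | i <;> rcases b with j | j <;>
    simp [pd_gExt_inl_inl hΓ, pd_gExt_of_isRight, pd_inl_fiberLinear, pd_inr_fiberLinear, hΓ,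
      gExtInv, extChristoffel]
  -- only `Γ̃^{l'}_{ij}` is left
  simp only [fiberLinear, extChristoffelCoeff, mul_add, mul_sub, Finset.mul_sum, Finset.sum_mul,
    Finset.sum_add_distrib, Finset.sum_sub_distrib]
  rw [Finset.sum_comm (f := fun _ _ => _ * (_ * _))]
  ring_nf
  simp only [← Finset.sum_mul]
  ring

end RiemannianExtension

lemma contDiff_curv {ι : Type} [Fintype ι] [DecidableEq ι] {Γ : ι → ι → ι → (ι → ℝ) → ℝ}
    (hΓ : ∀ k i j, ContDiff ℝ (⊤ : ℕ∞) (Γ k i j)) (l i j k : ι) :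
    ContDiff ℝ (⊤ : ℕ∞) (curv Γ l i j k) :=
  ((hΓ l j k).pd i |>.sub ((hΓ l i k).pd j)).add <| ContDiff.sum fun m _ =>
    ((hΓ l i m).mul (hΓ m j k)).sub ((hΓ l j m).mul (hΓ m i k))

section Curvature

variable {n : ℕ} {Γ : Fin n → Fin n → Fin n → (Fin n → ℝ) → ℝ}

variable (hΓ : ∀ k i j, ContDiff ℝ (⊤ : ℕ∞) (Γ k i j))
include hΓ

lemma curv_extChristoffel_inl (l i j k : Fin n) :
    curv (extChristoffel Γ) (Sum.inl l) (Sum.inl i) (Sum.inl j) (Sum.inl k)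
      = fun u => curv Γ l i j k (u ∘ Sum.inl) := by
  funext u
  simp [curv, extChristoffel, Fintype.sum_sum_type,
    pd_inl_comp_inl ((hΓ _ _ _).differentiable (by simp))]

lemma curv_extChristoffel_inl_of_isRight (l : Fin n) {a b c : Fin n ⊕ Fin n}
    (h : a.isRight ∨ b.isRight ∨ c.isRight) :
    curv (extChristoffel Γ) (Sum.inl l) a b c = 0 := by
  funext u
  rcases a with i | i <;> rcases b with j | j <;> rcases c with k | k
  · simp at h
  all_goals simp [curv, extChristoffel, Fintype.sum_sum_type, pd_zero,
      pd_inr_comp_inl ((hΓ _ _ _).differentiable (by simp))]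

lemma curv_extChristoffel_inr_inr (hsym : ∀ k i j, Γ k i j = Γ k j i) (l i j k : Fin n) :
    curv (extChristoffel Γ) (Sum.inr l) (Sum.inr i) (Sum.inl j) (Sum.inl k)
      = fun u => curv Γ i l k j (u ∘ Sum.inl) := by
  funext u
  simp [curv, extChristoffel, Fintype.sum_sum_type, pd_neg,
    pd_inr_fiberLinear (fun s => contDiff_extChristoffelCoeff hΓ s _ _ _),
    pd_inl_comp_inl ((hΓ _ _ _).differentiable (by simp)), extChristoffelCoeff, hsym, mul_comm]
  ring

lemma curv_extChristoffel_inr_inr_of_isRight (l i : Fin n) {b c : Fin n ⊕ Fin n}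
    (h : b.isRight ∨ c.isRight) :
    curv (extChristoffel Γ) (Sum.inr l) (Sum.inr i) b c = 0 := by
  funext u
  rcases b with j | j <;> rcases c with k | k
  · simp at h
  all_goals simp [curv, extChristoffel, Fintype.sum_sum_type, pd_zero, pd_neg,
      pd_inr_comp_inl ((hΓ _ _ _).differentiable (by simp))]

end Curvature

section CovariantDerivative

variable {n : ℕ} {Γ : Fin n → Fin n → Fin n → (Fin n → ℝ) → ℝ}
  (hΓ : ∀ k i j, ContDiff ℝ (⊤ : ℕ∞) (Γ k i j))
include hΓ

lemma covR_extChristoffel_inl (h l i j k : Fin n) (u : (Fin n ⊕ Fin n) → ℝ) :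
    covR (extChristoffel Γ) (Sum.inl h) (Sum.inl l) (Sum.inl i) (Sum.inl j) (Sum.inl k) u
      = covR Γ h l i j k (u ∘ Sum.inl) := by
  simp [covR, Fintype.sum_sum_type, curv_extChristoffel_inl hΓ,
    curv_extChristoffel_inl_of_isRight hΓ, extChristoffel,
    pd_inl_comp_inl ((contDiff_curv hΓ _ _ _ _).differentiable (by simp))]

lemma covR_extChristoffel_inl_of_isRight (l : Fin n) {h a b c : Fin n ⊕ Fin n}
    (hr : h.isRight ∨ a.isRight ∨ b.isRight ∨ c.isRight) (u : (Fin n ⊕ Fin n) → ℝ) :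
    covR (extChristoffel Γ) h (Sum.inl l) a b c u = 0 := by
  rcases h with h | h <;> rcases a with i | i <;> rcases b with j | j <;> rcases c with k | k
  · simp at hr
  all_goals simp [covR, Fintype.sum_sum_type, curv_extChristoffel_inl hΓ,
    curv_extChristoffel_inl_of_isRight hΓ, extChristoffel, pd_zero,
    pd_inr_comp_inl ((contDiff_curv hΓ _ _ _ _).differentiable (by simp))]

variable (hsym : ∀ k i j, Γ k i j = Γ k j i)
include hsym

lemma covR_extChristoffel_inr_inr (h l i j k : Fin n) (u : (Fin n ⊕ Fin n) → ℝ) :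
    covR (extChristoffel Γ) (Sum.inl h) (Sum.inr l) (Sum.inr i) (Sum.inl j) (Sum.inl k) u
      = covR Γ h i l k j (u ∘ Sum.inl) := by
  simp [covR, Fintype.sum_sum_type, curv_extChristoffel_inl_of_isRight hΓ,
    curv_extChristoffel_inr_inr hΓ hsym,
    curv_extChristoffel_inr_inr_of_isRight hΓ, extChristoffel,
    pd_inl_comp_inl ((contDiff_curv hΓ _ _ _ _).differentiable (by simp))]
  ring

lemma covR_extChristoffel_inr_inr_of_isRight (l i : Fin n) {h b c : Fin n ⊕ Fin n}
    (hr : h.isRight ∨ b.isRight ∨ c.isRight) (u : (Fin n ⊕ Fin n) → ℝ) :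
    covR (extChristoffel Γ) h (Sum.inr l) (Sum.inr i) b c u = 0 := by
  rcases h with h | h <;> rcases b with j | j <;> rcases c with k | k
  · simp at hr
  all_goals simp [covR, Fintype.sum_sum_type, curv_extChristoffel_inl_of_isRight hΓ,
    curv_extChristoffel_inr_inr hΓ hsym,
    curv_extChristoffel_inr_inr_of_isRight hΓ, extChristoffel, pd_zero,
    pd_inr_comp_inl ((contDiff_curv hΓ _ _ _ _).differentiable (by simp))]

end CovariantDerivative

section Szabo

variable {n : ℕ} {Γ : Fin n → Fin n → Fin n → (Fin n → ℝ) → ℝ}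
  (hΓ : ∀ k i j, ContDiff ℝ (⊤ : ℕ∞) (Γ k i j)) (u X : (Fin n ⊕ Fin n) → ℝ)
include hΓ

lemma szabo_extChristoffel_inl_inl (l i : Fin n) :
    szabo (extChristoffel Γ) u X (Sum.inl l) (Sum.inl i)
      = szabo Γ (u ∘ Sum.inl) (X ∘ Sum.inl) l i := by
  simp [szabo, Fintype.sum_sum_type, covR_extChristoffel_inl hΓ,
    covR_extChristoffel_inl_of_isRight hΓ]

lemma szabo_extChristoffel_inl_inr (l i : Fin n) :
    szabo (extChristoffel Γ) u X (Sum.inl l) (Sum.inr i) = 0 := by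
  simp [szabo, covR_extChristoffel_inl_of_isRight hΓ]

lemma szabo_extChristoffel_inr_inr (hsym : ∀ k i j, Γ k i j = Γ k j i) (l i : Fin n) :
    szabo (extChristoffel Γ) u X (Sum.inr l) (Sum.inr i)
      = szabo Γ (u ∘ Sum.inl) (X ∘ Sum.inl) i l := by
  simp [szabo, Fintype.sum_sum_type, covR_extChristoffel_inr_inr hΓ hsym,
    covR_extChristoffel_inr_inr_of_isRight hΓ hsym]
  refine Finset.sum_congr rfl fun _ _ => ?_
  rw [Finset.sum_comm]
  exact Finset.sum_congr rfl fun _ _ => Finset.sum_congr rfl fun _ _ => by ring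

lemma szabo_extChristoffel_eq_fromBlocks (hsym : ∀ k i j, Γ k i j = Γ k j i) :
    szabo (extChristoffel Γ) u X =
      fromBlocks (szabo Γ (u ∘ Sum.inl) (X ∘ Sum.inl)) 0 (szabo (extChristoffel Γ) u X).toBlocks₂₁
        (szabo Γ (u ∘ Sum.inl) (X ∘ Sum.inl))ᵀ := by
  ext (l | l) (i | i)
  · exact szabo_extChristoffel_inl_inl hΓ u X l i
  · exact szabo_extChristoffel_inl_inr hΓ u X l i
  · rfl
  · exact szabo_extChristoffel_inr_inr hΓ u X hsym l i

end Szabo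

/-- for the Riemannian extension `g_∇` of a torsion-free affine connection
`∇` on `ℝⁿ`, at any point `(p,ω) ∈ ℝ²ⁿ` and for any tangent vector `X̃ ∈ ℝ²ⁿ` with
horizontal part `X`, the characteristic polynomial of the Szabó operator `S̃(X̃)` of the
Levi-Civita connection of `g_∇` is the square of the characteristic polynomial of the
affine Szabó operator `S^∇(X)` at `p`. -/
theorem stmt_8 (n : ℕ) (Γ : Fin n → Fin n → Fin n → (Fin n → ℝ) → ℝ)
    (hsmooth : ∀ k i j, ContDiff ℝ (⊤ : ℕ∞) (Γ k i j))
    (hsym : ∀ k i j, Γ k i j = Γ k j i)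
    (u : (Fin n ⊕ Fin n) → ℝ) (Xt : (Fin n ⊕ Fin n) → ℝ) :
    (szabo (christoffel (gExt Γ)) u Xt).charpoly =
      (szabo Γ (u ∘ Sum.inl) (Xt ∘ Sum.inl)).charpoly ^ 2 := by
  rw [christoffel_gExt hsmooth, szabo_extChristoffel_eq_fromBlocks hsmooth u Xt hsym,
    charpoly_fromBlocks_zero₁₂, charpoly_transpose, sq]
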